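/- arXiv:1411.1736 — 2 statements merged into one kernel-verified Lean document; each statement's English description precedes it below -/
import Mathlib

section
/- In any weak factorization system (L, R) on a category E, if every map between R-maps over a common base Γ admits an (L,R)-factorization whose L-factor is substitution-stable in Γ (i.e. every pullback of it along a map into Γ lies in L), then every L-map between R-maps over Γ is substitution-stable in Γ. -/
open CategoryTheory Limits

universe v u

/-- A weak factorization system `(L, R)` on `C`: every map factors as an `L`-map followed by
an `R`-map, and the two classes are characterized by the lifting property against each other. -/
structure WFS (C : Type u) [Category.{v} C] where
  L : MorphismProperty C
  R : MorphismProperty C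
  llp : ∀ {A B : C} (f : A ⟶ B),
    L f ↔ ∀ {X Y : C} (g : X ⟶ Y), R g → HasLiftingProperty f g
  rlp : ∀ {X Y : C} (g : X ⟶ Y),
    R g ↔ ∀ {A B : C} (f : A ⟶ B), L f → HasLiftingProperty f g
  fact : ∀ {X Y : C} (f : X ⟶ Y),
    ∃ (Z : C) (i : X ⟶ Z) (p : Z ⟶ Y), L i ∧ R p ∧ i ≫ p = f

variable {C : Type u} [Category.{v} C] [HasPullbacks C]

/-- The pullback ("substitution") of a map `i : A ⟶ B` between objects `p : A ⟶ Γ`,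
`q : B ⟶ Γ` over `Γ`, along `f : Γ' ⟶ Γ`. -/
noncomputable def pbMap {Γ A B : C} (p : A ⟶ Γ) (q : B ⟶ Γ) (i : A ⟶ B) (hi : i ≫ q = p)
    {Γ' : C} (f : Γ' ⟶ Γ) : pullback p f ⟶ pullback q f :=
  pullback.map p f q f i (𝟙 Γ') (𝟙 Γ) (by rw [Category.comp_id, hi]) (by simp)

/-- `i : A ⟶ B`, a map over `Γ`, is substitution-stable in `Γ` (w.r.t. a wfs `W`):
its pullback along any map `Γ' ⟶ Γ` is an `L`-map. -/
def SubStable (W : WFS C) {Γ A B : C} (p : A ⟶ Γ) (q : B ⟶ Γ) (i : A ⟶ B)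
    (hi : i ≫ q = p) : Prop :=
  ∀ {Γ' : C} (f : Γ' ⟶ Γ), W.L (pbMap p q i hi f)

/-- if every map between `R`-maps over `Γ` admits an `(L,R)`-factorization whose
`L`-factor is substitution-stable in `Γ`, then every `L`-map between `R`-maps over `Γ` is
substitution-stable in `Γ` (retract argument). -/
theorem stmt4 (W : WFS C) (Γ : C)
    (hfact : ∀ {A B : C} (p : A ⟶ Γ) (q : B ⟶ Γ) (i : A ⟶ B), i ≫ q = p →
      W.R p → W.R q →
      ∃ (M : C) (j : A ⟶ M) (r : M ⟶ B), j ≫ r = i ∧ W.L j ∧ W.R r ∧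
        ∃ hj : j ≫ (r ≫ q) = p, SubStable W p (r ≫ q) j hj) :
    ∀ {A B : C} (p : A ⟶ Γ) (q : B ⟶ Γ) (i : A ⟶ B) (hi : i ≫ q = p),
      W.R p → W.R q → W.L i → SubStable W p q i hi := by
  intro A B p q i hi hp hq hLi
  obtain ⟨M, j, r, hjr, hLj, hRr, hj, hstable⟩ := hfact p q i hi hp hq
  -- lift i against r to get a section s : B ⟶ M
  have hlp : HasLiftingProperty i r := (W.llp i).1 hLi r hRr
  have sq : CommSq j i r (𝟙 B) := ⟨by simp [hjr]⟩
  obtain ⟨⟨⟨s, hs1, hs2⟩⟩⟩ := hlp.sq_hasLift sq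
  intro Γ' f
  rw [W.llp]
  intro X Y g hg
  have hlift : HasLiftingProperty (pbMap p (r ≫ q) j hj f) g :=
    (W.llp _).1 (hstable f) g hg
  have hsrq : s ≫ (r ≫ q) = q := by rw [← Category.assoc, hs2, Category.id_comp]
  have hcomp1 : pbMap p q i hi f ≫ pbMap q (r ≫ q) s hsrq f = pbMap p (r ≫ q) j hj f := by
    apply pullback.hom_ext <;> simp [pbMap, pullback.lift_fst, pullback.lift_snd, pullback.lift_fst_assoc, pullback.lift_snd_assoc, hs1]
  have hcomp2 : pbMap q (r ≫ q) s hsrq f ≫ pbMap (r ≫ q) q r rfl f = 𝟙 _ := by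
    apply pullback.hom_ext <;> simp [pbMap, pullback.lift_fst, pullback.lift_snd, pullback.lift_fst_assoc, pullback.lift_snd_assoc, hs2]
  have hcomp3 : pbMap p (r ≫ q) j hj f ≫ pbMap (r ≫ q) q r rfl f = pbMap p q i hi f := by
    apply pullback.hom_ext <;> simp [pbMap, pullback.lift_fst, pullback.lift_snd, pullback.lift_fst_assoc, pullback.lift_snd_assoc, hjr]
  constructor
  intro u v sq'
  have sq'' : CommSq u (pbMap p (r ≫ q) j hj f) g (pbMap (r ≫ q) q r rfl f ≫ v) := by
    constructor
    rw [← Category.assoc, hcomp3, sq'.w]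
  obtain ⟨⟨⟨l, hl1, hl2⟩⟩⟩ := hlift.sq_hasLift sq''
  exact ⟨⟨⟨pbMap q (r ≫ q) s hsrq f ≫ l,
    by rw [← Category.assoc, hcomp1, hl1],
    by rw [Category.assoc, hl2, ← Category.assoc, hcomp2, Category.id_comp]⟩⟩⟩
end

section
/- Let E be a finitely complete category equipped with a weak factorization system (L, R) such that: R-maps are exponentiable, L-maps are preserved by pullback along R-maps, and any L-map between R-maps over a common base is substitution-stable. Then the comprehension category on E whose types over Γ are R-maps into Γ has weakly stable identity types: for every R-map p : A → Γ, factoring the fibered diagonal A → A ×_Γ A as an L-map followed by an R-map yields (Id_A, r_A) all of whose pullbacks admit elimination fillers. -/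
/-!
Write `q : Id_A ⟶ Γ` for the composite `Id_A ⟶ A ×_Γ A ⟶ Γ`. It is an `R`-map, so `r_A` is an
`L`-map between `R`-maps over `Γ` and hence substitution-stable. Since `A' ×_{Γ'} A'` is the
pullback of `A ×_Γ A` along `f : Γ' ⟶ Γ`, pulling `Id_A` back to `A' ×_{Γ'} A'` is the same as
pulling `q` back along `f`, and under this identification the pulled-back reflexivity `r'` is
the substitution of `r_A` along `f`. So `r'` is an `L`-map, and an elimination filler is just a
diagonal filler of `r'` against the `R`-map `c`.
-/

open CategoryTheory Limits

universe v u

variable {C : Type u} [Category.{v} C] [HasPullbacks C]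

variable [HasFiniteLimits C]

/-- The comparison map `A' ×_{Γ'} A' ⟶ A ×_Γ A` induced by pulling back `p : A ⟶ Γ`
along `f : Γ' ⟶ Γ` (where `A' = Γ' ×_Γ A` and `p' = pullback.snd p f`). -/
noncomputable def sqMap {Γ Γ' A : C} (p : A ⟶ Γ) (f : Γ' ⟶ Γ) :
    pullback (pullback.snd p f) (pullback.snd p f) ⟶ pullback p p :=
  pullback.map (pullback.snd p f) (pullback.snd p f) p p
    (pullback.fst p f) (pullback.fst p f) f
    pullback.condition.symm pullback.condition.symm

namespace WFS

omit [HasPullbacks C] [HasFiniteLimits C]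

variable (W : WFS C)

lemma L_eq_llp : W.L = W.R.llp := by
  ext A B i
  exact W.llp i

lemma R_eq_rlp : W.R = W.L.rlp := by
  ext X Y g
  exact W.rlp g

instance : W.L.RespectsIso := by
  rw [L_eq_llp]
  infer_instance

instance : W.R.IsMultiplicative := by
  rw [R_eq_rlp]
  infer_instance

instance : W.R.IsStableUnderBaseChange := by
  rw [R_eq_rlp]
  infer_instance

variable {W} in
lemma exists_section_of_L_of_R {A B X : C} {i : A ⟶ B} {c : X ⟶ B} (hi : W.L i) (hc : W.R c)
    (d : A ⟶ X) (hd : d ≫ c = i) : ∃ j : B ⟶ X, j ≫ c = 𝟙 B ∧ i ≫ j = d := by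
  have := (W.llp i).1 hi c hc
  have sq : CommSq d i c (𝟙 B) := ⟨by simp [hd]⟩
  exact ⟨sq.lift, sq.fac_right, sq.fac_left⟩

end WFS

section Substitution

omit [HasFiniteLimits C]

variable {Γ Γ' A I : C} (p : A ⟶ Γ) (f : Γ' ⟶ Γ)

lemma isPullback_sqMap :
    IsPullback (sqMap p f) (pullback.fst _ _ ≫ pullback.snd p f) (pullback.fst p p ≫ p) f := by
  refine ⟨⟨by simp [sqMap, pullback.lift_snd_assoc, pullback.condition]⟩,
    ⟨PullbackCone.IsLimit.mk _ ?_ ?_ ?_ ?_⟩⟩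
  · intro c
    refine pullback.lift (pullback.lift (c.fst ≫ pullback.fst p p) c.snd ?_)
      (pullback.lift (c.fst ≫ pullback.snd p p) c.snd ?_) ?_
    · simpa using c.condition
    · simpa [← pullback.condition] using c.condition
    · rw [pullback.lift_snd, pullback.lift_snd]
  · intro c
    apply pullback.hom_ext <;>
      simp [sqMap, pullback.lift_fst_assoc, pullback.lift_snd_assoc, pullback.lift_fst,
        pullback.lift_snd]
  · intro c
    rw [pullback.lift_fst_assoc, pullback.lift_snd]
  · intro c m hfst hsnd
    apply pullback.hom_ext <;> apply pullback.hom_ext <;>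
      simp [← hfst, ← hsnd, sqMap, pullback.lift_fst, pullback.lift_snd, pullback.condition]

lemma isPullback_pullback_sqMap (qI : I ⟶ pullback p p) :
    IsPullback (pullback.fst qI (sqMap p f))
      (pullback.snd qI (sqMap p f) ≫ pullback.fst _ _ ≫ pullback.snd p f)
      (qI ≫ pullback.fst p p ≫ p) f :=
  (IsPullback.of_hasPullback qI (sqMap p f)).paste_vert (isPullback_sqMap p f)

lemma diagonal_factor_comp_eq {r : A ⟶ I} {qI : I ⟶ pullback p p}
    (hr : r ≫ qI = pullback.diagonal p) : r ≫ qI ≫ pullback.fst p p ≫ p = p := by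
  rw [reassoc_of% hr, pullback.diagonal_fst_assoc]

lemma SubStable.L_of_pullback_diagonal_factor {W : WFS C} {r : A ⟶ I} {qI : I ⟶ pullback p p}
    (hr : r ≫ qI = pullback.diagonal p)
    (hstab : SubStable W p (qI ≫ pullback.fst p p ≫ p) r (diagonal_factor_comp_eq p hr))
    (r' : pullback p f ⟶ pullback qI (sqMap p f))
    (hr'_snd : r' ≫ pullback.snd qI (sqMap p f) = pullback.diagonal (pullback.snd p f))
    (hr'_fst : r' ≫ pullback.fst qI (sqMap p f) = pullback.fst p f ≫ r) : W.L r' := by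
  let e := (isPullback_pullback_sqMap p f qI).isoPullback
  have hr' : r' = pbMap p _ r (diagonal_factor_comp_eq p hr) f ≫ e.inv := by
    rw [Iso.eq_comp_inv]
    apply pullback.hom_ext
    · simp [e, pbMap, pullback.lift_fst, hr'_fst]
    · simp [e, pbMap, pullback.lift_snd, reassoc_of% hr'_snd]
  rw [hr']
  exact MorphismProperty.RespectsIso.postcomp _ _ _ (hstab f)

end Substitution

theorem stmt17_general (W : WFS C)
    (hsub : ∀ (Γ : C) {A B : C} (p : A ⟶ Γ) (q : B ⟶ Γ) (i : A ⟶ B) (hi : i ≫ q = p),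
      W.R p → W.R q → W.L i → SubStable W p q i hi) :
    ∀ {Γ A : C} (p : A ⟶ Γ), W.R p →
      ∃ (I : C) (r : A ⟶ I) (qI : I ⟶ pullback p p),
        r ≫ qI = pullback.diagonal p ∧ W.L r ∧ W.R qI ∧
        -- weak stability: every pullback of `(I, r)` is again an identity type, i.e.
        -- admits elimination fillers
        ∀ {Γ' : C} (f : Γ' ⟶ Γ) (r' : pullback p f ⟶ pullback qI (sqMap p f)),
          r' ≫ pullback.snd qI (sqMap p f) = pullback.diagonal (pullback.snd p f) →
          r' ≫ pullback.fst qI (sqMap p f) = pullback.fst p f ≫ r →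
          ∀ (Ct : C) (c : Ct ⟶ pullback qI (sqMap p f)), W.R c →
            ∀ (d : pullback p f ⟶ Ct), d ≫ c = r' →
              ∃ j : pullback qI (sqMap p f) ⟶ Ct, j ≫ c = 𝟙 _ ∧ r' ≫ j = d := by
  intro Γ A p hp
  obtain ⟨I, r, qI, hr_L, hqI_R, hr⟩ := W.fact (pullback.diagonal p)
  refine ⟨I, r, qI, hr, hr_L, hqI_R, ?_⟩
  intro Γ' f r' hr'_snd hr'_fst Ct c hc d hd
  have hI_R : W.R (qI ≫ pullback.fst p p ≫ p) :=
    W.R.comp_mem _ _ hqI_R (W.R.comp_mem _ _ (W.R.pullback_fst _ _ hp) hp)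
  have hstab : SubStable W p _ r _ := hsub Γ p _ r (diagonal_factor_comp_eq p hr) hp hI_R hr_L
  exact W.exists_section_of_L_of_R (hstab.L_of_pullback_diagonal_factor p f hr r' hr'_snd hr'_fst)
    hc d hd

/-- given a wfs `(L, R)` on a finitely complete category in which `R`-maps are
exponentiable, `L`-maps are preserved by pullback along `R`-maps, and `L`-maps between
`R`-maps over a common base are substitution-stable, the comprehension category of `R`-maps
has weakly stable identity types: for every `R`-map `p : A ⟶ Γ`, factoring the fibered
diagonal `A ⟶ A ×_Γ A` as an `L`-map followed by an `R`-map gives `(Id_A, r_A)` all of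
whose pullbacks admit elimination fillers. -/
theorem stmt17 (W : WFS C)
    (hexp : ∀ {X Y : C} (g : Y ⟶ X), W.R g → (Over.pullback g).IsLeftAdjoint)
    (hLR : ∀ {A B X : C} (i : A ⟶ B) (g : X ⟶ B), W.L i → W.R g →
      W.L (pullback.fst g i))
    (hsub : ∀ (Γ : C) {A B : C} (p : A ⟶ Γ) (q : B ⟶ Γ) (i : A ⟶ B) (hi : i ≫ q = p),
      W.R p → W.R q → W.L i → SubStable W p q i hi) :
    ∀ {Γ A : C} (p : A ⟶ Γ), W.R p →
      ∃ (I : C) (r : A ⟶ I) (qI : I ⟶ pullback p p),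
        r ≫ qI = pullback.diagonal p ∧ W.L r ∧ W.R qI ∧
        -- weak stability: every pullback of `(I, r)` is again an identity type, i.e.
        -- admits elimination fillers
        ∀ {Γ' : C} (f : Γ' ⟶ Γ) (r' : pullback p f ⟶ pullback qI (sqMap p f)),
          r' ≫ pullback.snd qI (sqMap p f) = pullback.diagonal (pullback.snd p f) →
          r' ≫ pullback.fst qI (sqMap p f) = pullback.fst p f ≫ r →
          ∀ (Ct : C) (c : Ct ⟶ pullback qI (sqMap p f)), W.R c →
            ∀ (d : pullback p f ⟶ Ct), d ≫ c = r' →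
              ∃ j : pullback qI (sqMap p f) ⟶ Ct, j ≫ c = 𝟙 _ ∧ r' ≫ j = d :=
  stmt17_general W hsub
end
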